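/- arXiv:1210.0779 — 2 statements merged into one kernel-verified Lean document; each statement's English description precedes it below -/
import Mathlib

section
/- For every θ ∈ ℝ there exists a constant C_θ > 0 such that for all ν ∈ [-1,1] with ν ≠ 0 and all (x,z) ∈ D₀: |(D_x^θ D_z^θ k^ν)(x,z)| ≤ C_θ |α(x) + iν|; that is, the kernel (D_x^θ D_z^θ k^ν)(x,z)/(α(x)+iν) is bounded on D₀ uniformly in ν ∈ [-1,1] \ {0}. -/
/-! For fixed `z`, the function `D := D_z^θ k^ν(·, z)` solves `D'' = -(α + iν) D`, and
`D_x^θ D_z^θ k^ν(·, z) = iθ D' - iδ D`. By Gronwall, `A_ν`, `B_ν` and their derivatives are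
bounded on `[-L, H]` uniformly in `ν ∈ [-1, 1]`, so this function is Lipschitz in `x`, uniformly
in `ν` and `z`. It vanishes at `x = z`, hence is `O(|x - z|) = O(|x|)` on `D₀`, while
`r |x| ≤ |α x| ≤ |α x + iν|`. -/

open Complex

/-- the kernel `k^ν(x,z) = B_ν(z)A_ν(x) − B_ν(x)A_ν(z)` -/
noncomputable def kker (A B : ℝ → ℂ) (x z : ℝ) : ℂ := B z * A x - B x * A z

/-- `(D_z^θ k^ν)(x,z)` -/
noncomputable def Dzk (δ : ℝ → ℝ) (θ : ℝ) (A A' B B' : ℝ → ℂ) (x z : ℝ) : ℂ :=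
  Complex.I * (θ : ℂ) * (B' z * A x - B x * A' z)
    - Complex.I * (δ z : ℂ) * kker A B x z

/-- `∂_x (D_z^θ k^ν)(x,z)` -/
noncomputable def pxDzk (δ : ℝ → ℝ) (θ : ℝ) (A A' B B' : ℝ → ℂ) (x z : ℝ) : ℂ :=
  Complex.I * (θ : ℂ) * (B' z * A' x - B' x * A' z)
    - Complex.I * (δ z : ℂ) * (B z * A' x - B' x * A z)

/-- `(D_x^θ D_z^θ k^ν)(x,z)` -/
noncomputable def DxDzk (δ : ℝ → ℝ) (θ : ℝ) (A A' B B' : ℝ → ℂ) (x z : ℝ) : ℂ :=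
  Complex.I * (θ : ℂ) * pxDzk δ θ A A' B B' x z
    - Complex.I * (δ x : ℂ) * Dzk δ θ A A' B B' x z

open Set

lemma norm_le_mul_exp_of_norm_deriv_le_of_le {E : Type*} [NormedAddCommGroup E]
    [NormedSpace ℝ E] {f f' : ℝ → E} {K a b : ℝ} (hab : a ≤ b)
    (hf : ∀ t ∈ Icc a b, HasDerivAt f (f' t) t) (bound : ∀ t ∈ Icc a b, ‖f' t‖ ≤ K * ‖f t‖) :
    ‖f b‖ ≤ ‖f a‖ * Real.exp (K * (b - a)) := by
  have := norm_le_gronwallBound_of_norm_deriv_right_le (ε := 0)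
    (fun t ht => (hf t ht).continuousAt.continuousWithinAt)
    (fun t ht => (hf t (Ico_subset_Icc_self ht)).hasDerivWithinAt) le_rfl
    (fun t ht => by simpa using bound t (Ico_subset_Icc_self ht)) b ⟨hab, le_rfl⟩
  rwa [gronwallBound_ε0] at this

lemma norm_le_mul_exp_of_norm_deriv_le {E : Type*} [NormedAddCommGroup E] [NormedSpace ℝ E]
    {f f' : ℝ → E} {K a b : ℝ} (hf : ∀ t ∈ uIcc a b, HasDerivAt f (f' t) t)
    (bound : ∀ t ∈ uIcc a b, ‖f' t‖ ≤ K * ‖f t‖) :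
    ‖f b‖ ≤ ‖f a‖ * Real.exp (K * |b - a|) := by
  rcases le_total a b with hab | hba
  · rw [abs_of_nonneg (sub_nonneg.mpr hab)]
    rw [uIcc_of_le hab] at hf bound
    exact norm_le_mul_exp_of_norm_deriv_le_of_le hab hf bound
  · -- run the forward estimate for `t ↦ f (-t)` from `-a` to `-b`
    rw [abs_of_nonpos (sub_nonpos.mpr hba), neg_sub]
    rw [uIcc_of_ge hba] at hf bound
    have mem : ∀ t ∈ Icc (-a) (-b), -t ∈ Icc b a := fun t ht =>
      ⟨by linarith [ht.2], by linarith [ht.1]⟩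
    have := norm_le_mul_exp_of_norm_deriv_le_of_le (f := fun t => f (-t))
      (f' := fun t => -f' (-t)) (neg_le_neg hba)
      (fun t ht => by
        simpa [Function.comp_def] using (hf _ (mem t ht)).scomp t (hasDerivAt_neg t))
      (fun t ht => by simpa using bound _ (mem t ht))
    simpa only [neg_neg, neg_sub_neg] using this

lemma norm_le_exp_of_hasDerivAt_of_second_order {u u' w : ℝ → ℂ} {K a b c : ℝ}
    (hc : c ∈ Icc a b) (hu : ∀ t ∈ Icc a b, HasDerivAt u (u' t) t)
    (hu' : ∀ t ∈ Icc a b, HasDerivAt u' (-w t * u t) t) (hw : ∀ t ∈ Icc a b, ‖w t‖ ≤ K)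
    (hc₁ : ‖u c‖ ≤ 1) (hc₂ : ‖u' c‖ ≤ 1) {t : ℝ} (ht : t ∈ Icc a b) :
    ‖u t‖ ≤ Real.exp (max 1 K * (b - a)) ∧ ‖u' t‖ ≤ Real.exp (max 1 K * (b - a)) := by
  have sub : uIcc c t ⊆ Icc a b := ordConnected_Icc.uIcc_subset hc ht
  have hK : (0 : ℝ) ≤ max 1 K := zero_le_one.trans (le_max_left _ _)
  -- Gronwall for the first-order system `(u, u')' = (u', -w u)`
  have system : ‖(u t, u' t)‖ ≤ ‖(u c, u' c)‖ * Real.exp (max 1 K * |t - c|) := by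
    refine norm_le_mul_exp_of_norm_deriv_le (f' := fun s => (u' s, -w s * u s))
      (fun s hs => (hu s (sub hs)).prodMk (hu' s (sub hs))) fun s hs => ?_
    refine max_le ((norm_snd_le (u s, u' s)).trans
      (le_mul_of_one_le_left (norm_nonneg _) (le_max_left _ _))) ?_
    rw [norm_mul, norm_neg]
    exact mul_le_mul ((hw s (sub hs)).trans (le_max_right _ _)) (norm_fst_le (u s, u' s))
      (norm_nonneg _) hK
  have bound : ‖(u t, u' t)‖ ≤ Real.exp (max 1 K * (b - a)) := by
    refine system.trans ((mul_le_of_le_one_left (Real.exp_pos _).le (max_le hc₁ hc₂)).trans ?_)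
    gcongr
    exact abs_sub_le_iff.mpr ⟨by linarith [ht.2, hc.1], by linarith [ht.1, hc.2]⟩
  exact ⟨(norm_fst_le _).trans bound, (norm_snd_le _).trans bound⟩

lemma norm_I_mul_sub_I_mul_le (a b : ℝ) (p q : ℂ) :
    ‖I * a * p - I * b * q‖ ≤ |a| * ‖p‖ + |b| * ‖q‖ := by
  simpa [norm_mul] using norm_sub_le (I * a * p) (I * b * q)

lemma norm_mul_sub_mul_le (a b c d : ℂ) : ‖a * b - c * d‖ ≤ ‖a‖ * ‖b - d‖ + ‖a - c‖ * ‖d‖ := by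
  rw [← norm_mul, ← norm_mul, show a * b - c * d = a * (b - d) + (a - c) * d by ring]
  exact norm_add_le _ _

lemma norm_mul_sub_mul_le_two_mul_sq {p q p' q' : ℂ} {M : ℝ} (hp : ‖p‖ ≤ M) (hq : ‖q‖ ≤ M)
    (hp' : ‖p'‖ ≤ M) (hq' : ‖q'‖ ≤ M) : ‖p * q - p' * q'‖ ≤ 2 * M ^ 2 := by
  have hM : 0 ≤ M := (norm_nonneg p).trans hp
  calc ‖p * q - p' * q'‖ ≤ ‖p‖ * ‖q‖ + ‖p'‖ * ‖q'‖ := by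
        simpa only [norm_mul] using norm_sub_le (p * q) (p' * q')
    _ ≤ M * M + M * M := by gcongr
    _ = 2 * M ^ 2 := by ring

/-- The operator `D^θ f = iθ f' − iδ f` of the paper, with the derivative `f'` of `f` given
separately. -/
noncomputable def thetaDeriv (δ : ℝ → ℝ) (θ : ℝ) (f f' : ℝ → ℂ) (t : ℝ) : ℂ :=
  I * θ * f' t - I * δ t * f t

lemma norm_thetaDeriv_sub_le {δ : ℝ → ℝ} {θ : ℝ} {f f' w : ℝ → ℂ} {s : Set ℝ} (hs : Convex ℝ s)
    {M K Mδ : ℝ} {Kδ : NNReal} (hf : ∀ t ∈ s, HasDerivAt f (f' t) t)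
    (hf' : ∀ t ∈ s, HasDerivAt f' (-w t * f t) t) (hfM : ∀ t ∈ s, ‖f t‖ ≤ M)
    (hf'M : ∀ t ∈ s, ‖f' t‖ ≤ M) (hw : ∀ t ∈ s, ‖w t‖ ≤ K) (hδM : ∀ t ∈ s, |δ t| ≤ Mδ)
    (hδ : LipschitzOnWith Kδ δ s) {x z : ℝ} (hx : x ∈ s) (hz : z ∈ s) :
    ‖thetaDeriv δ θ f f' x - thetaDeriv δ θ f f' z‖ ≤ (|θ| * K + Mδ + Kδ) * M * |x - z| := by
  have hM : 0 ≤ M := (norm_nonneg _).trans (hfM x hx)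
  have hK : 0 ≤ K := (norm_nonneg _).trans (hw x hx)
  have lip_f : ‖f x - f z‖ ≤ M * |x - z| :=
    hs.norm_image_sub_le_of_norm_hasDerivWithin_le (fun t ht => (hf t ht).hasDerivWithinAt)
      hf'M hz hx
  have lip_f' : ‖f' x - f' z‖ ≤ K * M * |x - z| := by
    refine hs.norm_image_sub_le_of_norm_hasDerivWithin_le
      (fun t ht => (hf' t ht).hasDerivWithinAt) (fun t ht => ?_) hz hx
    rw [norm_mul, norm_neg]
    exact mul_le_mul (hw t ht) (hfM t ht) (norm_nonneg _) hK
  have lip_δ : ‖((δ x : ℂ) - δ z)‖ ≤ Kδ * |x - z| := by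
    rw [← ofReal_sub, norm_real]
    exact hδ.dist_le_mul x hx z hz
  have split : thetaDeriv δ θ f f' x - thetaDeriv δ θ f f' z
      = I * θ * (f' x - f' z) - I * 1 * (δ x * f x - δ z * f z) := by
    simp only [thetaDeriv]; ring
  rw [split]
  calc _ ≤ |θ| * ‖f' x - f' z‖ + |1| * ‖(δ x : ℂ) * f x - δ z * f z‖ :=
        norm_I_mul_sub_I_mul_le _ _ _ _
    _ ≤ |θ| * (K * M * |x - z|) + (Mδ * (M * |x - z|) + Kδ * |x - z| * M) := by
        rw [abs_one, one_mul]
        refine add_le_add (by gcongr) ((norm_mul_sub_mul_le _ _ _ _).trans (add_le_add ?_ ?_))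
        · rw [norm_real]
          exact mul_le_mul (hδM x hx) lip_f (norm_nonneg _) ((abs_nonneg _).trans (hδM x hx))
        · exact mul_le_mul lip_δ (hfM z hz) (norm_nonneg _) (by positivity)
    _ = (|θ| * K + Mδ + Kδ) * M * |x - z| := by ring

section Kernel

variable {δ : ℝ → ℝ} {θ : ℝ} {A A' B B' : ℝ → ℂ}

lemma DxDzk_eq_thetaDeriv (x z : ℝ) :
    DxDzk δ θ A A' B B' x z
      = thetaDeriv δ θ (Dzk δ θ A A' B B' · z) (pxDzk δ θ A A' B B' · z) x :=
  rfl

-- the Wronskian terms of `iθ ∂ₓ(D_z^θ k)` and `iδ D_z^θ k` cancel on the diagonal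
lemma DxDzk_self (z : ℝ) : DxDzk δ θ A A' B B' z z = 0 := by
  simp only [DxDzk, pxDzk, Dzk, kker]
  ring

lemma hasDerivAt_Dzk {t : ℝ} (hA : HasDerivAt A (A' t) t) (hB : HasDerivAt B (B' t) t)
    (z : ℝ) : HasDerivAt (Dzk δ θ A A' B B' · z) (pxDzk δ θ A A' B B' t z) t :=
  (((hA.const_mul (B' z)).sub (hB.mul_const (A' z))).const_mul (I * θ)).sub
    (((hA.const_mul (B z)).sub (hB.mul_const (A z))).const_mul (I * δ z))

lemma hasDerivAt_pxDzk {t : ℝ} {w : ℂ} (hA' : HasDerivAt A' (-w * A t) t)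
    (hB' : HasDerivAt B' (-w * B t) t) (z : ℝ) :
    HasDerivAt (pxDzk δ θ A A' B B' · z) (-w * Dzk δ θ A A' B B' t z) t := by
  have h := (((hA'.const_mul (B' z)).sub (hB'.mul_const (A' z))).const_mul (I * θ)).sub
    (((hA'.const_mul (B z)).sub (hB'.mul_const (A z))).const_mul (I * δ z))
  exact h.congr_deriv (by simp only [Dzk, kker]; ring)

section Bounds

variable {M : ℝ} {t z : ℝ} (hA : ‖A t‖ ≤ M ∧ ‖A' t‖ ≤ M) (hB : ‖B t‖ ≤ M ∧ ‖B' t‖ ≤ M)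
  (hAz : ‖A z‖ ≤ M ∧ ‖A' z‖ ≤ M) (hBz : ‖B z‖ ≤ M ∧ ‖B' z‖ ≤ M)
include hA hB hAz hBz

lemma norm_Dzk_le : ‖Dzk δ θ A A' B B' t z‖ ≤ (|θ| + |δ z|) * (2 * M ^ 2) := by
  calc _ ≤ |θ| * ‖B' z * A t - B t * A' z‖ + |δ z| * ‖B z * A t - B t * A z‖ :=
        norm_I_mul_sub_I_mul_le _ _ _ _
    _ ≤ |θ| * (2 * M ^ 2) + |δ z| * (2 * M ^ 2) := by
        gcongr <;> exact norm_mul_sub_mul_le_two_mul_sq (by tauto) (by tauto) (by tauto) (by tauto)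
    _ = _ := by ring

lemma norm_pxDzk_le : ‖pxDzk δ θ A A' B B' t z‖ ≤ (|θ| + |δ z|) * (2 * M ^ 2) := by
  calc _ ≤ |θ| * ‖B' z * A' t - B' t * A' z‖ + |δ z| * ‖B z * A' t - B' t * A z‖ :=
        norm_I_mul_sub_I_mul_le _ _ _ _
    _ ≤ |θ| * (2 * M ^ 2) + |δ z| * (2 * M ^ 2) := by
        gcongr <;> exact norm_mul_sub_mul_le_two_mul_sq (by tauto) (by tauto) (by tauto) (by tauto)
    _ = _ := by ring

end Bounds

lemma norm_DxDzk_le {s : Set ℝ} (hs : Convex ℝ s) {w : ℝ → ℂ} {M K Mδ : ℝ} {Kδ : NNReal}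
    (hA : ∀ t ∈ s, HasDerivAt A (A' t) t) (hA' : ∀ t ∈ s, HasDerivAt A' (-w t * A t) t)
    (hB : ∀ t ∈ s, HasDerivAt B (B' t) t) (hB' : ∀ t ∈ s, HasDerivAt B' (-w t * B t) t)
    (hAM : ∀ t ∈ s, ‖A t‖ ≤ M ∧ ‖A' t‖ ≤ M) (hBM : ∀ t ∈ s, ‖B t‖ ≤ M ∧ ‖B' t‖ ≤ M)
    (hw : ∀ t ∈ s, ‖w t‖ ≤ K) (hδM : ∀ t ∈ s, |δ t| ≤ Mδ) (hδ : LipschitzOnWith Kδ δ s)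
    {x z : ℝ} (hx : x ∈ s) (hz : z ∈ s) :
    ‖DxDzk δ θ A A' B B' x z‖ ≤ (|θ| * K + Mδ + Kδ) * ((|θ| + Mδ) * (2 * M ^ 2)) * |x - z| := by
  have hDM : ∀ t ∈ s, ‖Dzk δ θ A A' B B' t z‖ ≤ (|θ| + Mδ) * (2 * M ^ 2) := fun t ht =>
    (norm_Dzk_le (hAM t ht) (hBM t ht) (hAM z hz) (hBM z hz)).trans (by gcongr; exact hδM z hz)
  have hPM : ∀ t ∈ s, ‖pxDzk δ θ A A' B B' t z‖ ≤ (|θ| + Mδ) * (2 * M ^ 2) := fun t ht =>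
    (norm_pxDzk_le (hAM t ht) (hBM t ht) (hAM z hz) (hBM z hz)).trans (by gcongr; exact hδM z hz)
  have lip := norm_thetaDeriv_sub_le (θ := θ) hs
    (fun t ht => hasDerivAt_Dzk (hA t ht) (hB t ht) z)
    (fun t ht => hasDerivAt_pxDzk (hA' t ht) (hB' t ht) z) hDM hPM hw hδM hδ hx hz
  rwa [← DxDzk_eq_thetaDeriv, ← DxDzk_eq_thetaDeriv, DxDzk_self, sub_zero] at lip

end Kernel

lemma abs_sub_le_norm_ofReal_add_I_mul_div {r x z a ν : ℝ} (hr : 0 < r) (hz : z ∈ uIcc 0 x)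
    (hx : r * |x| ≤ |a|) : |x - z| ≤ ‖(a : ℂ) + I * ν‖ / r := by
  rw [le_div_iff₀ hr, mul_comm]
  calc r * |x - z| ≤ r * |x| := by
        simpa using mul_le_mul_of_nonneg_left (abs_sub_right_of_mem_uIcc hz) hr.le
    _ ≤ |a| := hx
    _ ≤ ‖(a : ℂ) + I * ν‖ := by simpa using abs_re_le_norm ((a : ℂ) + I * ν)

theorem regularized_kernel_uniformly_bounded_general
    (L H r : ℝ) (hL : 0 < L) (hH : 0 < H) (hr : 0 < r)
    (α δ : ℝ → ℝ)
    (hα : ContDiffOn ℝ 2 α (Set.Ici (-L)))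
    (hαr : ∀ x ∈ Set.Icc (-L) H, r * |x| ≤ |α x|)
    (hδ : ContDiffOn ℝ 1 δ (Set.Ici (-L)))
    (θ : ℝ)
    -- the families ν ↦ A_ν, B_ν of fundamental solutions of −u'' − (α+iν)u = 0
    (A A' B B' : ℝ → ℝ → ℂ)
    (hA : ∀ ν ∈ Set.Icc (-1:ℝ) 1, ∀ x, -L ≤ x → HasDerivAt (A ν) (A' ν x) x)
    (hA' : ∀ ν ∈ Set.Icc (-1:ℝ) 1, ∀ x, -L ≤ x →
      HasDerivAt (A' ν) (-((α x : ℂ) + Complex.I * (ν : ℂ)) * A ν x) x)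
    (hB : ∀ ν ∈ Set.Icc (-1:ℝ) 1, ∀ x, -L ≤ x → HasDerivAt (B ν) (B' ν x) x)
    (hB' : ∀ ν ∈ Set.Icc (-1:ℝ) 1, ∀ x, -L ≤ x →
      HasDerivAt (B' ν) (-((α x : ℂ) + Complex.I * (ν : ℂ)) * B ν x) x)
    (hA0 : ∀ ν ∈ Set.Icc (-1:ℝ) 1, A ν 0 = 1 ∧ A' ν 0 = 0)
    (hB0 : ∀ ν ∈ Set.Icc (-1:ℝ) 1, B ν 0 = 0 ∧ B' ν 0 = 1) :
    ∃ C > 0, ∀ ν ∈ Set.Icc (-1:ℝ) 1, ν ≠ 0 →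
      ∀ x z : ℝ, x ∈ Set.Icc (-L) H →
      ((0 ≤ z ∧ z ≤ x) ∨ (x ≤ z ∧ z ≤ 0)) →
      ‖DxDzk δ θ (A ν) (A' ν) (B ν) (B' ν) x z‖ ≤ C * ‖(α x : ℂ) + Complex.I * (ν : ℂ)‖ := by
  have h0 : (0 : ℝ) ∈ Icc (-L) H := ⟨by linarith, hH.le⟩
  obtain ⟨Cα, hCα⟩ := isCompact_Icc.exists_bound_of_continuousOn
    (hα.continuousOn.mono (Icc_subset_Ici_self : Icc (-L) H ⊆ _))
  obtain ⟨Cδ, hCδ⟩ := isCompact_Icc.exists_bound_of_continuousOn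
    (hδ.continuousOn.mono (Icc_subset_Ici_self : Icc (-L) H ⊆ _))
  obtain ⟨Kδ, hKδ⟩ := (hδ.mono Icc_subset_Ici_self).exists_lipschitzOnWith one_ne_zero
    (convex_Icc (-L) H) isCompact_Icc
  set C := (|θ| * (Cα + 1) + Cδ + Kδ) *
    ((|θ| + Cδ) * (2 * Real.exp (max 1 (Cα + 1) * (H - -L)) ^ 2))
  refine ⟨max C 1 / r, by positivity, fun ν hν _ x z hx hzx => ?_⟩
  have hw : ∀ t ∈ Icc (-L) H, ‖(α t : ℂ) + I * ν‖ ≤ Cα + 1 := fun t ht =>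
    (norm_add_le _ _).trans (by simpa using add_le_add (hCα t ht) (abs_le.mpr hν))
  have solution_bound {u u' : ℝ → ℂ} (hu : ∀ t, -L ≤ t → HasDerivAt u (u' t) t)
      (hu' : ∀ t, -L ≤ t → HasDerivAt u' (-((α t : ℂ) + I * ν) * u t) t)
      (h₁ : ‖u 0‖ ≤ 1) (h₂ : ‖u' 0‖ ≤ 1) t (ht : t ∈ Icc (-L) H) :=
    norm_le_exp_of_hasDerivAt_of_second_order h0 (fun s hs => hu s hs.1)
      (fun s hs => hu' s hs.1) hw h₁ h₂ ht
  have hz : z ∈ Icc (-L) H := ordConnected_Icc.uIcc_subset h0 hx (mem_uIcc.mpr hzx)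
  calc _ ≤ C * |x - z| := norm_DxDzk_le (convex_Icc _ _)
        (fun t ht => hA ν hν t ht.1) (fun t ht => hA' ν hν t ht.1)
        (fun t ht => hB ν hν t ht.1) (fun t ht => hB' ν hν t ht.1)
        (solution_bound (hA ν hν) (hA' ν hν) (by simp [(hA0 ν hν).1]) (by simp [(hA0 ν hν).2]))
        (solution_bound (hB ν hν) (hB' ν hν) (by simp [(hB0 ν hν).1]) (by simp [(hB0 ν hν).2]))
        hw (fun t ht => by simpa using hCδ t ht) hKδ hx hz
    _ ≤ max C 1 * (‖(α x : ℂ) + I * ν‖ / r) := by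
        gcongr
        exacts [le_max_left _ _,
          abs_sub_le_norm_ofReal_add_I_mul_div hr (mem_uIcc.mpr hzx) (hαr x hx)]
    _ = max C 1 / r * ‖(α x : ℂ) + I * ν‖ := by ring

/-- Uniform boundedness of the regularized kernel `(D_x^θ D_z^θ k^ν)(x,z)/(α(x)+iν)`
on `D₀ = {(x,z) ∈ [-L,H]² : 0 ≤ z ≤ x or x ≤ z ≤ 0}`, uniformly in
`ν ∈ [-1,1] \ {0}` (Remark 4.3 of the paper). -/
theorem regularized_kernel_uniformly_bounded
    (L H r : ℝ) (hL : 0 < L) (hH : 0 < H) (hr : 0 < r)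
    (α δ : ℝ → ℝ)
    (hα : ContDiffOn ℝ 2 α (Set.Ici (-L)))
    (hαbd : ∃ C, ∀ x, -L ≤ x → |α x| ≤ C)
    (hα0 : α 0 = 0) (hα'0 : deriv α 0 < 0)
    (hαr : ∀ x ∈ Set.Icc (-L) H, r * |x| ≤ |α x|)
    (hδ : ContDiffOn ℝ 1 δ (Set.Ici (-L)))
    (hδbd : ∃ C, ∀ x, -L ≤ x → |δ x| ≤ C)
    (θ : ℝ)
    -- the families ν ↦ A_ν, B_ν of fundamental solutions of −u'' − (α+iν)u = 0
    (A A' B B' : ℝ → ℝ → ℂ)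
    (hA : ∀ ν ∈ Set.Icc (-1:ℝ) 1, ∀ x, -L ≤ x → HasDerivAt (A ν) (A' ν x) x)
    (hA' : ∀ ν ∈ Set.Icc (-1:ℝ) 1, ∀ x, -L ≤ x →
      HasDerivAt (A' ν) (-((α x : ℂ) + Complex.I * (ν : ℂ)) * A ν x) x)
    (hB : ∀ ν ∈ Set.Icc (-1:ℝ) 1, ∀ x, -L ≤ x → HasDerivAt (B ν) (B' ν x) x)
    (hB' : ∀ ν ∈ Set.Icc (-1:ℝ) 1, ∀ x, -L ≤ x →
      HasDerivAt (B' ν) (-((α x : ℂ) + Complex.I * (ν : ℂ)) * B ν x) x)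
    (hA0 : ∀ ν ∈ Set.Icc (-1:ℝ) 1, A ν 0 = 1 ∧ A' ν 0 = 0)
    (hB0 : ∀ ν ∈ Set.Icc (-1:ℝ) 1, B ν 0 = 0 ∧ B' ν 0 = 1) :
    ∃ C > 0, ∀ ν ∈ Set.Icc (-1:ℝ) 1, ν ≠ 0 →
      ∀ x z : ℝ, x ∈ Set.Icc (-L) H →
      ((0 ≤ z ∧ z ≤ x) ∨ (x ≤ z ∧ z ≤ 0)) →
      ‖DxDzk δ θ (A ν) (A' ν) (B ν) (B' ν) x z‖ ≤ C * ‖(α x : ℂ) + Complex.I * (ν : ℂ)‖ :=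
  regularized_kernel_uniformly_bounded_general L H r hL hH hr α δ hα hαr hδ θ A A' B B' hA hA' hB
    hB' hA0 hB0
end

section
/- Define v(x) = x e^{−x/2} for x ∈ ℝ, and for x > 0 define w(x) = −e^{x/2} + x e^{−x/2} ∫_1^x (e^t / t) dt. Then: (i) v''(x) + (−1/4 + 1/x) v(x) = 0 for all x ≠ 0; (ii) w''(x) + (−1/4 + 1/x) w(x) = 0 for all x > 0; (iii) the Wronskian is normalized: v(x) w'(x) − v'(x) w(x) = 1 for all x > 0; (iv) w is bounded near the origin with lim_{x→0⁺} w(x) = −1, even though v(0) = 0; hence the second fundamental solution of the Whittaker-type equation E'' + (−1/4 + 1/x)E = 0 does not vanish at the singular point x = 0. -/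
/-- The regular solution `v(x) = x e^{−x/2}` of the Whittaker-type equation. -/
noncomputable def vBudden (x : ℝ) : ℝ := x * Real.exp (-x / 2)

/-- The second fundamental solution
`w(x) = −e^{x/2} + x e^{−x/2} ∫_1^x e^t/t dt` of the Whittaker-type equation. -/
noncomputable def wBudden (x : ℝ) : ℝ :=
  -Real.exp (x / 2) + x * Real.exp (-x / 2) * ∫ t in (1:ℝ)..x, Real.exp t / t

/-!
Writing `w = -e^{x/2} + v I` with `I' = e^x / x`, the equation for `v` and the Wronskian identity
are direct computations, and the equation for `w` follows from them: differentiating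
`v w' - v' w = 1` gives `v w'' = v'' w`. Near the origin `|I(x)| ≤ e |log x|`, so
`v I = O(x log x)` is bounded on `(0, 1]` and tends to `0`, while `-e^{x/2} → -1`.
-/

open Real Filter Set Topology

noncomputable def wronskian (f g : ℝ → ℝ) (x : ℝ) : ℝ := f x * deriv g x - deriv f x * g x

theorem deriv_deriv_add_mul_eq_zero_of_wronskian_eventuallyEq {v w : ℝ → ℝ} {x q c : ℝ}
    (hv : DifferentiableAt ℝ v x) (hw : DifferentiableAt ℝ w x)
    (hv' : DifferentiableAt ℝ (deriv v) x) (hw' : DifferentiableAt ℝ (deriv w) x)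
    (hW : wronskian v w =ᶠ[𝓝 x] fun _ => c) (hvx : v x ≠ 0)
    (hode : deriv (deriv v) x + q * v x = 0) :
    deriv (deriv w) x + q * w x = 0 := by
  have hW' : HasDerivAt (wronskian v w)
      (v x * deriv (deriv w) x - deriv (deriv v) x * w x) x := by
    refine ((hv.hasDerivAt.mul hw'.hasDerivAt).sub
      (hv'.hasDerivAt.mul hw.hasDerivAt)).congr_deriv ?_
    ring
  have hconst : v x * deriv (deriv w) x - deriv (deriv v) x * w x = 0 := by
    rw [← hW'.deriv, hW.deriv_eq, deriv_const]
  apply mul_left_cancel₀ hvx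
  linear_combination hconst + w x * hode

/-- `Ei(x) - Ei(1)` for `x > 0`. -/
noncomputable def expDivIntegral (x : ℝ) : ℝ := ∫ t in (1:ℝ)..x, exp t / t

theorem wBudden_eq : wBudden = fun x => -exp (x / 2) + vBudden x * expDivIntegral x := rfl

theorem continuousOn_exp_div_self : ContinuousOn (fun t => exp t / t) (Ioi 0) :=
  continuousOn_exp.div continuousOn_id fun _ ht => ne_of_gt ht

theorem hasDerivAt_expDivIntegral {x : ℝ} (hx : 0 < x) :
    HasDerivAt expDivIntegral (exp x / x) x :=
  intervalIntegral.integral_hasDerivAt_right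
    (continuousOn_exp_div_self.mono fun _ ht =>
      (lt_min one_pos hx).trans_le ht.1).intervalIntegrable
    (continuousOn_exp_div_self.stronglyMeasurableAtFilter isOpen_Ioi x hx)
    (continuousOn_exp_div_self.continuousAt (Ioi_mem_nhds hx))

theorem abs_expDivIntegral_le {x : ℝ} (hx : 0 < x) (hx1 : x ≤ 1) :
    |expDivIntegral x| ≤ exp 1 * |log x| := by
  have hbound : ∀ t ∈ Ioc x 1, ‖exp t / t‖ ≤ exp 1 * t⁻¹ := by
    rintro t ⟨hxt, ht1⟩
    have ht : 0 < t := hx.trans hxt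
    rw [Real.norm_of_nonneg (by positivity), div_eq_mul_inv]
    gcongr
  calc |expDivIntegral x| = ‖∫ t in x..1, exp t / t‖ := by
        rw [expDivIntegral, intervalIntegral.integral_symm, Real.norm_eq_abs, abs_neg]
    _ ≤ ∫ t in x..1, exp 1 * t⁻¹ :=
        intervalIntegral.norm_integral_le_of_norm_le hx1 (.of_forall hbound)
          ((intervalIntegral.intervalIntegrable_inv
            (fun _ ht => ((lt_min hx one_pos).trans_le ht.1).ne') continuousOn_id).const_mul _)
    _ = exp 1 * |log x| := by
        rw [intervalIntegral.integral_const_mul, integral_inv_of_pos hx one_pos, one_div, log_inv,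
          abs_of_nonpos (log_nonpos hx.le hx1)]

theorem hasDerivAt_exp_neg_half (x : ℝ) :
    HasDerivAt (fun y => exp (-y / 2)) (-exp (-x / 2) / 2) x := by
  convert ((hasDerivAt_neg x).div_const 2).exp using 1
  ring

theorem hasDerivAt_vBudden (x : ℝ) : HasDerivAt vBudden ((1 - x / 2) * exp (-x / 2)) x := by
  refine ((hasDerivAt_id' x).mul (hasDerivAt_exp_neg_half x)).congr_deriv ?_
  ring

theorem deriv_vBudden : deriv vBudden = fun x => (1 - x / 2) * exp (-x / 2) :=
  funext fun x => (hasDerivAt_vBudden x).deriv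

theorem hasDerivAt_deriv_vBudden (x : ℝ) :
    HasDerivAt (deriv vBudden) ((x / 4 - 1) * exp (-x / 2)) x := by
  rw [deriv_vBudden]
  refine ((((hasDerivAt_id' x).div_const 2).const_sub 1).mul
    (hasDerivAt_exp_neg_half x)).congr_deriv ?_
  ring

theorem hasDerivAt_wBudden {x : ℝ} (hx : 0 < x) :
    HasDerivAt wBudden (exp (x / 2) / 2 + deriv vBudden x * expDivIntegral x) x := by
  rw [wBudden_eq]
  refine (((hasDerivAt_id' x).div_const 2).exp.neg.add
    ((hasDerivAt_vBudden x).mul (hasDerivAt_expDivIntegral hx))).congr_deriv ?_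
  have hcancel : x * exp (-x / 2) * (exp x / x) = exp (x / 2) := by
    rw [mul_right_comm, mul_div_cancel₀ _ hx.ne', ← exp_add]
    ring_nf
  rw [(hasDerivAt_vBudden x).deriv, vBudden]
  linear_combination hcancel

theorem vBudden_ode {x : ℝ} (hx : x ≠ 0) :
    deriv (deriv vBudden) x + (-(1:ℝ)/4 + 1/x) * vBudden x = 0 := by
  rw [(hasDerivAt_deriv_vBudden x).deriv, vBudden]
  field_simp
  ring

theorem wronskian_vBudden_wBudden {x : ℝ} (hx : 0 < x) : wronskian vBudden wBudden x = 1 := by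
  have hexp : exp (x / 2) * exp (-x / 2) = 1 := by
    rw [← exp_add, ← add_div, add_neg_cancel, zero_div, exp_zero]
  rw [wronskian, (hasDerivAt_wBudden hx).deriv, wBudden_eq, deriv_vBudden]
  simp only [vBudden]
  linear_combination hexp

theorem wBudden_ode {x : ℝ} (hx : 0 < x) :
    deriv (deriv wBudden) x + (-(1:ℝ)/4 + 1/x) * wBudden x = 0 := by
  have hderiv : deriv wBudden =ᶠ[𝓝 x]
      fun y => exp (y / 2) / 2 + deriv vBudden y * expDivIntegral y :=
    eventually_of_mem (Ioi_mem_nhds hx) fun _ hy => (hasDerivAt_wBudden hy).deriv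
  refine deriv_deriv_add_mul_eq_zero_of_wronskian_eventuallyEq
    (hasDerivAt_vBudden x).differentiableAt (hasDerivAt_wBudden hx).differentiableAt
    (hasDerivAt_deriv_vBudden x).differentiableAt ?_
    (eventually_of_mem (Ioi_mem_nhds hx) fun _ hy => wronskian_vBudden_wBudden hy)
    (by rw [vBudden]; positivity) (vBudden_ode hx.ne')
  refine DifferentiableAt.congr_of_eventuallyEq ?_ hderiv
  exact ((hasDerivAt_id' x).div_const 2).exp.differentiableAt.div_const 2 |>.add
    ((hasDerivAt_deriv_vBudden x).differentiableAt.mul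
      (hasDerivAt_expDivIntegral hx).differentiableAt)

theorem abs_vBudden_mul_expDivIntegral_le {x : ℝ} (hx : 0 < x) (hx1 : x ≤ 1) :
    |vBudden x * expDivIntegral x| ≤ exp 1 * |x * log x| := by
  have hexp : exp (-x / 2) ≤ 1 := exp_le_one_iff.mpr (by linarith)
  calc |vBudden x * expDivIntegral x| = x * exp (-x / 2) * |expDivIntegral x| := by
        rw [vBudden, abs_mul, abs_of_pos (by positivity)]
    _ ≤ x * 1 * (exp 1 * |log x|) := by
        gcongr
        exact abs_expDivIntegral_le hx hx1
    _ = exp 1 * |x * log x| := by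
        rw [abs_mul, abs_of_pos hx]
        ring

theorem abs_wBudden_le {x : ℝ} (hx : 0 < x) (hx1 : x ≤ 1) :
    |wBudden x| ≤ exp (1 / 2) + exp 1 := by
  have hlog : |x * log x| ≤ 1 := by
    rw [mul_comm]
    exact (abs_log_mul_self_lt x hx hx1).le
  calc |wBudden x| ≤ |exp (x / 2)| + |vBudden x * expDivIntegral x| := by
        rw [wBudden_eq, ← abs_neg (exp _)]
        exact abs_add_le _ _
    _ ≤ exp (1 / 2) + exp 1 * 1 := by
        gcongr
        · rw [abs_of_pos (exp_pos _)]
          gcongr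
        · exact (abs_vBudden_mul_expDivIntegral_le hx hx1).trans (by gcongr)
    _ = exp (1 / 2) + exp 1 := by rw [mul_one]

theorem tendsto_wBudden_nhdsGT_zero : Tendsto wBudden (𝓝[>] 0) (𝓝 (-1)) := by
  have hexp : Tendsto (fun x : ℝ => -exp (x / 2)) (𝓝[>] 0) (𝓝 (-1)) := by
    refine ((by fun_prop : Continuous fun x : ℝ => -exp (x / 2)).tendsto' 0 (-1) ?_).mono_left
      nhdsWithin_le_nhds
    simp
  have hxlog : Tendsto (fun x : ℝ => exp 1 * |x * log x|) (𝓝[>] 0) (𝓝 0) := by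
    refine ((continuous_const.mul continuous_mul_log.abs).tendsto' 0 0 ?_).mono_left
      nhdsWithin_le_nhds
    simp
  have hsmall : Tendsto (fun x => vBudden x * expDivIntegral x) (𝓝[>] 0) (𝓝 0) := by
    refine squeeze_zero_norm' ?_ hxlog
    filter_upwards [Ioc_mem_nhdsGT one_pos] with x hx
    exact abs_vBudden_mul_expDivIntegral_le hx.1 hx.2
  rw [wBudden_eq]
  simpa using hexp.add hsmall

/-- The exactly solvable Budden problem: `v` and `w` solve the Whittaker-type
equation `E'' + (−1/4 + 1/x)E = 0`, their Wronskian is normalized to `1`, and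
`w` is bounded near the origin with `w(0⁺) = −1 ≠ 0`, while `v(0) = 0`. -/
theorem budden_whittaker_solutions :
    (∀ x : ℝ, x ≠ 0 →
      deriv (deriv vBudden) x + (-(1:ℝ)/4 + 1/x) * vBudden x = 0)
    ∧ (∀ x : ℝ, 0 < x →
      deriv (deriv wBudden) x + (-(1:ℝ)/4 + 1/x) * wBudden x = 0)
    ∧ (∀ x : ℝ, 0 < x →
      vBudden x * deriv wBudden x - deriv vBudden x * wBudden x = 1)
    ∧ (∃ M : ℝ, ∀ x ∈ Set.Ioc (0:ℝ) 1, |wBudden x| ≤ M)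
    ∧ Filter.Tendsto wBudden (nhdsWithin 0 (Set.Ioi 0)) (nhds (-1))
    ∧ vBudden 0 = 0 :=
  ⟨fun _ hx => vBudden_ode hx, fun _ hx => wBudden_ode hx,
    fun _ hx => wronskian_vBudden_wBudden hx,
    ⟨_, fun _ hx => abs_wBudden_le hx.1 hx.2⟩, tendsto_wBudden_nhdsGT_zero, by simp [vBudden]⟩
end
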